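/- arXiv:2105.14312 — 3 statements merged into one kernel-verified Lean document; each statement's English description precedes it below -/
import Mathlib

section
/- (Proposition 2.1(v).) Let M ⊆ Y be nonempty with M - int K ≠ Y. Then Y is the union of the three pairwise disjoint sets M - int K, WSup M, and WSup M + int K. -/
open Pointwise

section
set_option linter.unusedSectionVars false
variable {Y : Type*} [AddCommGroup Y] [Module ℝ Y] [TopologicalSpace Y]
  [IsTopologicalAddGroup Y] [ContinuousSMul ℝ Y]

lemma coneAdd' (K : Set Y) (hKcx : Convex ℝ K)
    (hKcone : ∀ ⦃c : ℝ⦄, 0 ≤ c → ∀ ⦃y : Y⦄, y ∈ K → c • y ∈ K) :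
    ∀ a ∈ K, ∀ b ∈ K, a + b ∈ K := by
  intro a ha b hb
  have h := hKcx ha hb (by norm_num : (0:ℝ) ≤ 1/2) (by norm_num : (0:ℝ) ≤ 1/2)
    (by norm_num)
  have h2 := hKcone (by norm_num : (0:ℝ) ≤ 2) h
  rwa [smul_add, smul_smul, smul_smul, show (2:ℝ)*(1/2) = 1 by norm_num, one_smul,
    one_smul] at h2

lemma addInt' (K : Set Y) (hKcx : Convex ℝ K)
    (hKcone : ∀ ⦃c : ℝ⦄, 0 ≤ c → ∀ ⦃y : Y⦄, y ∈ K → c • y ∈ K) :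
    ∀ a ∈ K, ∀ b ∈ interior K, a + b ∈ interior K := by
  intro a ha b hb
  have hsub : {a} + interior K ⊆ K := by
    rintro x hx
    rw [Set.singleton_add, Set.mem_image] at hx
    obtain ⟨y, hy, rfl⟩ := hx
    exact coneAdd' K hKcx hKcone a ha y (interior_subset hy)
  have hopen : IsOpen ({a} + interior K) := isOpen_interior.add_left
  exact interior_maximal hsub hopen (Set.add_mem_add rfl hb)

lemma smulInt' (K : Set Y)
    (hKcone : ∀ ⦃c : ℝ⦄, 0 ≤ c → ∀ ⦃y : Y⦄, y ∈ K → c • y ∈ K) :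
    ∀ c : ℝ, 0 < c → ∀ b ∈ interior K, c • b ∈ interior K := by
  intro c hc b hb
  have hopen : IsOpen (c • interior K) := isOpen_interior.smul₀ (ne_of_gt hc)
  have hsub : c • interior K ⊆ K := by
    rintro x ⟨y, hy, rfl⟩
    exact hKcone hc.le (interior_subset hy)
  exact interior_maximal hsub hopen (Set.smul_mem_smul_set hb)
end

/-- The set of weakly supremal elements of `M ⊆ Y` w.r.t. the cone `K`. -/
def WSup {Y : Type*} [AddCommGroup Y] [TopologicalSpace Y] (K M : Set Y) : Set Y :=
  {v : Y | (∀ m ∈ M, v - m ∉ -interior K) ∧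
    ∀ w : Y, w - v ∈ -interior K → ∃ m ∈ M, w - m ∈ -interior K}

/-- Proposition 2.1(v): if `M` is nonempty and `M - int K ≠ Y` then `Y` decomposes as the
disjoint union of `M - int K`, `WSup M`, and `WSup M + int K`. -/
theorem stmt_15
    {Y : Type*} [AddCommGroup Y] [Module ℝ Y] [TopologicalSpace Y]
    [IsTopologicalAddGroup Y] [ContinuousSMul ℝ Y] [LocallyConvexSpace ℝ Y] [T2Space Y]
    (K : Set Y) (hKcl : IsClosed K) (hKcx : Convex ℝ K)
    (hKcone : ∀ ⦃c : ℝ⦄, 0 ≤ c → ∀ ⦃y : Y⦄, y ∈ K → c • y ∈ K)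
    (hKne : K ≠ Set.univ) (hKint : (interior K).Nonempty)
    (M : Set Y) (hM : M.Nonempty) (hMne : M - interior K ≠ Set.univ) :
    (M - interior K) ∪ WSup K M ∪ (WSup K M + interior K) = Set.univ ∧
    Disjoint (M - interior K) (WSup K M) ∧
    Disjoint (M - interior K) (WSup K M + interior K) ∧
    Disjoint (WSup K M) (WSup K M + interior K) := by
  set A := M - interior K with hAdef
  obtain ⟨k₀, hk₀⟩ := hKint
  -- membership characterization of A
  have hAmem : ∀ x, x ∈ A ↔ ∃ m ∈ M, x - m ∈ -interior K := by
    intro x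
    constructor
    · rintro ⟨m, hm, z, hz, rfl⟩
      exact ⟨m, hm, by simpa using Set.neg_mem_neg.2 hz⟩
    · rintro ⟨m, hm, hx⟩
      rw [Set.mem_neg, neg_sub] at hx
      exact ⟨m, hm, m - x, hx, sub_sub_cancel m x⟩
  -- A is open
  have hAopen : IsOpen A := IsOpen.sub_left isOpen_interior
  -- closure A - interior K ⊆ A
  have hclA : ∀ x ∈ closure A, ∀ k ∈ interior K, x - k ∈ A := by
    intro x hx k hk
    have hU : IsOpen {a : Y | a - x + k ∈ interior K} := by
      have : Continuous fun a : Y => a - x + k := (continuous_id.sub continuous_const).add continuous_const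
      exact isOpen_interior.preimage this
    have hxU : x ∈ {a : Y | a - x + k ∈ interior K} := by simp [hk]
    obtain ⟨a, haU, haA⟩ := mem_closure_iff.1 hx _ hU hxU
    obtain ⟨m, hm, z, hz, rfl⟩ := haA
    refine (hAmem _).2 ⟨m, hm, ?_⟩
    rw [Set.mem_neg, neg_sub]
    have : m - (x - k) = z + ((m - z) - x + k) := by abel
    rw [this]
    exact addInt' K hKcx hKcone z (interior_subset hz) _ haU
  -- WSup = closure A \ A
  have hW : WSup K M = closure A \ A := by
    ext v
    constructor
    · rintro ⟨h1, h2⟩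
      have hvA : v ∉ A := by
        intro hv
        obtain ⟨m, hm, hvm⟩ := (hAmem v).1 hv
        exact h1 m hm hvm
      refine ⟨?_, hvA⟩
      have hten : Filter.Tendsto (fun t : ℝ => v - t • k₀) (nhdsWithin 0 (Set.Ioi 0))
          (nhds v) := by
        have hc : Continuous fun t : ℝ => v - t • k₀ := continuous_const.sub (continuous_id.smul continuous_const)
        have := hc.tendsto 0
        simp only [zero_smul, sub_zero] at this
        exact this.mono_left nhdsWithin_le_nhds
      refine mem_closure_of_tendsto hten ?_
      filter_upwards [self_mem_nhdsWithin] with t ht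
      have htk : t • k₀ ∈ interior K := smulInt' K hKcone t ht k₀ hk₀
      have : (v - t • k₀) - v ∈ -interior K := by
        rw [Set.mem_neg]; simpa using htk
      obtain ⟨m, hm, hvm⟩ := h2 _ this
      exact (hAmem _).2 ⟨m, hm, hvm⟩
    · rintro ⟨hvcl, hvA⟩
      refine ⟨fun m hm hvm => hvA ((hAmem v).2 ⟨m, hm, hvm⟩), fun w hw => ?_⟩
      rw [Set.mem_neg, neg_sub] at hw
      have := hclA v hvcl _ hw
      rw [show v - (v - w) = w by abel] at this
      exact (hAmem w).1 this
  refine ⟨?_, ?_, ?_, ?_⟩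
  · ext v
    simp only [Set.mem_univ, iff_true, Set.mem_union]
    by_cases hvA : v ∈ A
    · exact Or.inl (Or.inl hvA)
    by_cases hvcl : v ∈ closure A
    · exact Or.inl (Or.inr (hW ▸ ⟨hvcl, hvA⟩))
    right
    -- find t₀ > 0 with v - t₀ • k₀ ∈ A
    obtain ⟨m, hm⟩ := hM
    have hcont : Filter.Tendsto (fun c : ℝ => c • (m - v) + k₀) (nhdsWithin 0 (Set.Ioi 0))
        (nhds k₀) := by
      have hc : Continuous fun c : ℝ => c • (m - v) + k₀ := (continuous_id.smul continuous_const).add continuous_const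
      have := hc.tendsto 0
      simp only [zero_smul, zero_add] at this
      exact this.mono_left nhdsWithin_le_nhds
    have hev : ∀ᶠ c in nhdsWithin 0 (Set.Ioi (0:ℝ)),
        c • (m - v) + k₀ ∈ interior K := hcont.eventually (isOpen_interior.mem_nhds hk₀)
    obtain ⟨c, hck, hc0⟩ := (hev.and self_mem_nhdsWithin).exists
    have hc0' : (0:ℝ) < c := hc0
    -- v - (1/c) • k₀ ∈ A
    have hkey : (m - v) + c⁻¹ • k₀ ∈ interior K := by
      have := smulInt' K hKcone c⁻¹ (by positivity) _ hck
      rwa [smul_add, smul_smul, inv_mul_cancel₀ hc0'.ne', one_smul] at this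
    set T : Set ℝ := {t : ℝ | 0 ≤ t ∧ v - t • k₀ ∈ A} with hT
    have ht₀ : c⁻¹ ∈ T := by
      refine ⟨by positivity, (hAmem _).2 ⟨m, hm, ?_⟩⟩
      rw [Set.mem_neg]
      rw [show -(v - c⁻¹ • k₀ - m) = (m - v) + c⁻¹ • k₀ by abel]
      exact hkey
    have hTne : T.Nonempty := ⟨c⁻¹, ht₀⟩
    have hTbdd : BddBelow T := ⟨0, fun t ht => ht.1⟩
    have hup : ∀ s ∈ T, ∀ t, s < t → t ∈ T := by
      intro s hs t hst
      refine ⟨le_trans hs.1 hst.le, ?_⟩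
      have h1 : (t - s) • k₀ ∈ interior K := smulInt' K hKcone _ (by linarith) k₀ hk₀
      have := hclA _ (subset_closure hs.2) _ h1
      rwa [show v - s • k₀ - (t - s) • k₀ = v - t • k₀ by rw [sub_smul]; abel] at this
    set t₀ := sInf T with ht₀def
    have ht₀0 : 0 ≤ t₀ := le_csInf hTne fun t ht => ht.1
    have hIoi : ∀ t, t₀ < t → t ∈ T := by
      intro t ht
      obtain ⟨s, hsT, hst⟩ := exists_lt_of_csInf_lt hTne ht
      exact hup s hsT t hst
    set w := v - t₀ • k₀ with hwdef
    have hwcl : w ∈ closure A := by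
      have hten : Filter.Tendsto (fun t : ℝ => v - t • k₀) (nhdsWithin t₀ (Set.Ioi t₀))
          (nhds w) := by
        have hc2 : Continuous fun t : ℝ => v - t • k₀ := continuous_const.sub (continuous_id.smul continuous_const)
        exact (hc2.tendsto t₀).mono_left nhdsWithin_le_nhds
      refine mem_closure_of_tendsto hten ?_
      filter_upwards [self_mem_nhdsWithin] with t ht
      exact (hIoi t ht).2
    have ht₀pos : 0 < t₀ := by
      rcases ht₀0.lt_or_eq with h | h
      · exact h
      · exfalso; apply hvcl; rwa [hwdef, ← h, zero_smul, sub_zero] at hwcl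
    have hwA : w ∉ A := by
      intro hwA
      have hopen : IsOpen {t : ℝ | v - t • k₀ ∈ A} := by
        have hc2 : Continuous fun t : ℝ => v - t • k₀ := continuous_const.sub (continuous_id.smul continuous_const)
        exact hAopen.preimage hc2
      obtain ⟨ε, hε, hball⟩ := Metric.isOpen_iff.1 hopen t₀ hwA
      set t' := t₀ - min (ε/2) (t₀/2) with ht'
      have htlt : t' < t₀ := by
        have : 0 < min (ε/2) (t₀/2) := lt_min (by linarith) (by linarith)
        simp only [ht']; linarith
      have ht'T : t' ∈ T := by
        refine ⟨by simp only [ht']; have := min_le_right (ε/2) (t₀/2); linarith, ?_⟩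
        apply hball
        rw [Metric.mem_ball, Real.dist_eq]
        have h1 : min (ε/2) (t₀/2) ≤ ε/2 := min_le_left _ _
        have h2 : (0:ℝ) < min (ε/2) (t₀/2) := lt_min (by linarith) (by linarith)
        rw [abs_sub_lt_iff]; constructor <;> simp only [ht'] <;> linarith
      exact absurd (csInf_le hTbdd ht'T) (not_le.2 htlt)
    rw [hW]
    exact ⟨w, ⟨hwcl, hwA⟩, t₀ • k₀, smulInt' K hKcone t₀ ht₀pos k₀ hk₀, by
      show v - t₀ • k₀ + t₀ • k₀ = v; abel⟩
  · rw [hW, Set.disjoint_left]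
    intro x hx hW'
    exact hW'.2 hx
  · rw [hW, Set.disjoint_left]
    rintro x hx ⟨w, hw, u, hu, rfl⟩
    apply hw.2
    have := hclA _ (subset_closure hx) u hu
    rwa [add_sub_cancel_right] at this
  · rw [hW, Set.disjoint_left]
    rintro x hx ⟨w, hw, u, hu, rfl⟩
    apply hw.2
    have := hclA _ hx.1 u hu
    rwa [add_sub_cancel_right] at this
end

section
/- (Proposition 2.1(iv) and (vi).) Let M ⊆ Y be nonempty with M - int K ≠ Y. Then WSup M - int K = M - int K, and WSup M = cl(M - int K) \ (M - int K), where cl denotes topological closure. -/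
open Pointwise

/-- Proposition 2.1(iv), (vi): if `M` is nonempty and `M - int K ≠ Y` then
`WSup M - int K = M - int K` and `WSup M = cl(M - int K) \ (M - int K)`. -/
theorem stmt_16
    {Y : Type*} [AddCommGroup Y] [Module ℝ Y] [TopologicalSpace Y]
    [IsTopologicalAddGroup Y] [ContinuousSMul ℝ Y] [LocallyConvexSpace ℝ Y] [T2Space Y]
    (K : Set Y) (hKcl : IsClosed K) (hKcx : Convex ℝ K)
    (hKcone : ∀ ⦃c : ℝ⦄, 0 ≤ c → ∀ ⦃y : Y⦄, y ∈ K → c • y ∈ K)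
    (hKne : K ≠ Set.univ) (hKint : (interior K).Nonempty)
    (M : Set Y) (hM : M.Nonempty) (hMne : M - interior K ≠ Set.univ) :
    WSup K M - interior K = M - interior K ∧
    WSup K M = closure (M - interior K) \ (M - interior K) := by
  set U : Set Y := interior K with hUdef
  set A : Set Y := M - U with hAdef
  -- scaling of U by positive reals
  have hsmul : ∀ {c : ℝ}, 0 < c → ∀ {y : Y}, y ∈ U → c • y ∈ U := by
    intro c hc y hy
    have h1 : c • K ⊆ K := by
      rintro x ⟨y', hy', rfl⟩
      exact hKcone hc.le hy'
    have h2 : c • U = interior (c • K) := (interior_smul₀ (ne_of_gt hc) K).symm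
    have : c • y ∈ interior (c • K) := by
      rw [← h2]; exact Set.smul_mem_smul_set hy
    exact interior_mono h1 this
  -- U + K ⊆ U
  have hKK : ∀ {x y : Y}, x ∈ K → y ∈ K → x + y ∈ K := by
    intro x y hx hy
    have h := hKcx hx hy (by norm_num : (0:ℝ) ≤ 1/2) (by norm_num : (0:ℝ) ≤ 1/2) (by norm_num)
    have h2 := hKcone (by norm_num : (0:ℝ) ≤ 2) h
    have : (2:ℝ) • ((1/2 : ℝ) • x + (1/2 : ℝ) • y) = x + y := by
      rw [smul_add, smul_smul, smul_smul]; norm_num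
    rwa [this] at h2
  have haddUK : ∀ {k y : Y}, k ∈ U → y ∈ K → k + y ∈ U := by
    intro k y hk hy
    have hsub : U + {y} ⊆ K := by
      rintro x ⟨u, hu, z, hz, rfl⟩
      simp only [Set.mem_singleton_iff] at hz
      subst hz
      exact hKK (interior_subset hu) hy
    have hopen : IsOpen (U + {y} : Set Y) := by
      have h1 : (U + {y} : Set Y) = (fun x => x + y) '' U := by
        ext x
        simp [Set.mem_add, eq_comm]
      rw [h1]
      exact (Homeomorph.addRight y).isOpenMap U isOpen_interior
    have : k + y ∈ U + ({y} : Set Y) := ⟨k, hk, y, rfl, rfl⟩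
    exact interior_maximal hsub hopen this
  -- membership in A
  have hmemA : ∀ {v : Y}, v ∈ A ↔ ∃ m ∈ M, v - m ∈ -U := by
    intro v
    constructor
    · rintro ⟨m, hm, k, hk, rfl⟩
      exact ⟨m, hm, by simpa using Set.neg_mem_neg.2 hk⟩
    · rintro ⟨m, hm, hv⟩
      rw [Set.mem_neg] at hv
      exact ⟨m, hm, -(v - m), hv, by module⟩
  -- A - U ⊆ A and A ⊆ A - U
  have hAU1 : ∀ {a k : Y}, a ∈ A → k ∈ U → a - k ∈ A := by
    rintro a k ⟨m, hm, k', hk', rfl⟩ hk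
    exact ⟨m, hm, k' + k, haddUK hk' (interior_subset hk), sub_add_eq_sub_sub _ _ _⟩
  have hAU2 : ∀ {a : Y}, a ∈ A → ∃ b ∈ A, ∃ k ∈ U, a = b - k := by
    rintro a ⟨m, hm, k, hk, rfl⟩
    have h2 : (1/2 : ℝ) • k ∈ U := hsmul (by norm_num) hk
    refine ⟨m - (1/2 : ℝ) • k, ⟨m, hm, (1/2 : ℝ) • k, h2, rfl⟩, (1/2 : ℝ) • k, h2, ?_⟩
    module
  -- closure A - U ⊆ A
  have hclA : ∀ {v k : Y}, v ∈ closure A → k ∈ U → v - k ∈ A := by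
    intro v k hv hk
    have hN : IsOpen ((fun x => x - v + k) ⁻¹' U) :=
      (((continuous_id.sub continuous_const).add continuous_const)).isOpen_preimage U isOpen_interior
    have hvN : v ∈ (fun x => x - v + k) ⁻¹' U := by
      simp only [Set.mem_preimage, sub_self, zero_add]; exact hk
    obtain ⟨a, haN, haA⟩ := (mem_closure_iff.1 hv) _ hN hvN
    have : v - k = a - (a - v + k) := by abel
    rw [this]
    exact hAU1 haA haN
  -- pick k₀ in U
  obtain ⟨k₀, hk₀⟩ := hKint
  have hk₀U : k₀ ∈ U := hk₀
  -- part (vi)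
  have hvi : WSup K M = closure A \ A := by
    ext v
    constructor
    · rintro ⟨h1, h2⟩
      have hvA : v ∉ A := by
        intro hv
        obtain ⟨m, hm, hvm⟩ := hmemA.1 hv
        exact h1 m hm hvm
      refine ⟨?_, hvA⟩
      -- v - t • k₀ ∈ A for t > 0
      have hray : ∀ t : ℝ, 0 < t → v - t • k₀ ∈ A := by
        intro t ht
        have : (v - t • k₀) - v ∈ -U := by
          rw [Set.mem_neg]
          have : -((v - t • k₀) - v) = t • k₀ := by abel
          rw [this]
          exact hsmul ht hk₀U
        obtain ⟨m, hm, hwm⟩ := h2 _ this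
        exact hmemA.2 ⟨m, hm, hwm⟩
      have htend : Filter.Tendsto (fun t : ℝ => v - t • k₀) (nhdsWithin 0 (Set.Ioi 0)) (nhds v) := by
        have : Filter.Tendsto (fun t : ℝ => v - t • k₀) (nhds 0) (nhds (v - (0:ℝ) • k₀)) := by
          exact Filter.Tendsto.sub tendsto_const_nhds ((continuous_id.smul continuous_const).tendsto 0)
        simp only [zero_smul, sub_zero] at this
        exact this.mono_left nhdsWithin_le_nhds
      exact mem_closure_of_tendsto htend
        (Filter.eventually_iff_exists_mem.2 ⟨Set.Ioi 0, self_mem_nhdsWithin,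
          fun t ht => hray t ht⟩)
    · rintro ⟨hvcl, hvA⟩
      constructor
      · intro m hm hvm
        exact hvA (hmemA.2 ⟨m, hm, hvm⟩)
      · intro w hw
        rw [Set.mem_neg] at hw
        have hk : v - w ∈ U := by
          have : -(w - v) = v - w := by abel
          rwa [this] at hw
        have hwA : w ∈ A := by
          have : w = v - (v - w) := by abel
          rw [this]
          exact hclA hvcl hk
        obtain ⟨m, hm, hwm⟩ := hmemA.1 hwA
        exact ⟨m, hm, hwm⟩
  refine ⟨?_, hvi⟩
  -- part (iv)
  ext a
  constructor
  · rintro ⟨w, hw, k, hk, rfl⟩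
    have hwcl : w ∈ closure A := (hvi ▸ hw).1
    exact hclA hwcl hk
  · intro haA
    -- ray argument
    set T : Set ℝ := {t : ℝ | 0 ≤ t ∧ a + t • k₀ ∈ A} with hTdef
    have h0T : (0:ℝ) ∈ T := ⟨le_refl 0, by simpa using haA⟩
    have hTne : T.Nonempty := ⟨0, h0T⟩
    -- downward closure of T
    have hTdown : ∀ {t t' : ℝ}, 0 ≤ t → t ≤ t' → t' ∈ T → t ∈ T := by
      intro t t' ht htt' ht'
      rcases eq_or_lt_of_le htt' with rfl | hlt
      · exact ht'
      · refine ⟨ht, ?_⟩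
        have : a + t • k₀ = (a + t' • k₀) - (t' - t) • k₀ := by
          rw [sub_smul]; abel
        rw [this]
        exact hAU1 ht'.2 (hsmul (by linarith) hk₀U)
    -- T is bounded above
    have hTbdd : BddAbove T := by
      obtain ⟨y, hy⟩ : ∃ y : Y, y ∉ A := by
        by_contra h
        push_neg at h
        exact hMne (Set.eq_univ_of_forall h)
      -- find t₀ with (a - y) + t₀ • k₀ ∈ U
      have : ∃ t₀ : ℝ, 0 < t₀ ∧ (a - y) + t₀ • k₀ ∈ U := by
        have htend : Filter.Tendsto (fun t : ℝ => t⁻¹ • (a - y) + k₀) Filter.atTop (nhds k₀) := by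
          have h1 : Filter.Tendsto (fun t : ℝ => t⁻¹ • (a - y)) Filter.atTop (nhds ((0:ℝ) • (a - y))) :=
            Filter.Tendsto.smul_const tendsto_inv_atTop_zero (a - y)
          rw [zero_smul] at h1
          have := h1.add (tendsto_const_nhds (x := k₀))
          simpa using this
        have hev : ∀ᶠ t : ℝ in Filter.atTop, t⁻¹ • (a - y) + k₀ ∈ U :=
          htend.eventually (isOpen_interior.eventually_mem hk₀U)
        obtain ⟨t₀, ht₀, ht₀U⟩ := (hev.and (Filter.eventually_gt_atTop 0)).exists
        refine ⟨t₀, ht₀U, ?_⟩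
        have := hsmul ht₀U ht₀
        have heq : t₀ • (t₀⁻¹ • (a - y) + k₀) = (a - y) + t₀ • k₀ := by
          rw [smul_add, smul_smul, mul_inv_cancel₀ (ne_of_gt ht₀U), one_smul]
        rwa [heq] at this
      obtain ⟨t₀, ht₀pos, ht₀⟩ := this
      refine ⟨t₀, fun t ht => ?_⟩
      by_contra hlt
      push_neg at hlt
      -- then t₀ ∈ T, so a + t₀ • k₀ ∈ A, so y ∈ A
      have ht₀T : t₀ ∈ T := hTdown ht₀pos.le hlt.le ht
      have : y ∈ A := by
        have : y = (a + t₀ • k₀) - ((a - y) + t₀ • k₀) := by abel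
        rw [this]
        exact hAU1 ht₀T.2 ht₀
      exact hy this
    set s : ℝ := sSup T with hsdef
    have hs0 : 0 ≤ s := le_csSup hTbdd h0T
    have hAopen : IsOpen A := by
      have : A = ⋃ m ∈ M, (fun x => m - x) '' U := by
        ext x
        simp only [Set.mem_iUnion, Set.mem_image, hAdef, Set.mem_sub]
        constructor
        · rintro ⟨m, hm, k, hk, rfl⟩; exact ⟨m, hm, k, hk, rfl⟩
        · rintro ⟨m, hm, k, hk, rfl⟩; exact ⟨m, hm, k, hk, rfl⟩
      rw [this]
      refine isOpen_biUnion fun m _ => ?_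
      have h1 : IsOpen ((fun x : Y => -x) '' U) := (Homeomorph.neg Y).isOpenMap U isOpen_interior
      have h2 : IsOpen ((fun x : Y => m + x) '' ((fun x : Y => -x) '' U)) :=
        (Homeomorph.addLeft m).isOpenMap _ h1
      have h3 : (fun x : Y => m - x) '' U = (fun x : Y => m + x) '' ((fun x : Y => -x) '' U) := by
        rw [Set.image_image]
        simp [sub_eq_add_neg]
      rw [h3]
      exact h2
    -- continuity of ray
    have hraycont : Continuous (fun t : ℝ => a + t • k₀) :=
      continuous_const.add (continuous_id.smul continuous_const)
    -- s ∉ A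
    have hsA : a + s • k₀ ∉ A := by
      intro hsA
      have hopen : IsOpen ((fun t : ℝ => a + t • k₀) ⁻¹' A) := hraycont.isOpen_preimage A hAopen
      obtain ⟨ε, hε, hball⟩ := Metric.isOpen_iff.1 hopen s hsA
      have : s + ε/2 ∈ T := by
        refine ⟨by linarith, ?_⟩
        apply hball
        simp [Real.dist_eq, abs_of_pos]
        rw [abs_of_pos] <;> linarith
      have := le_csSup hTbdd this
      linarith
    -- s > 0
    have hspos : 0 < s := by
      have hopen : IsOpen ((fun t : ℝ => a + t • k₀) ⁻¹' A) := hraycont.isOpen_preimage A hAopen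
      have h0 : (0:ℝ) ∈ (fun t : ℝ => a + t • k₀) ⁻¹' A := by simpa using haA
      obtain ⟨ε, hε, hball⟩ := Metric.isOpen_iff.1 hopen 0 h0
      have : ε/2 ∈ T := by
        refine ⟨by linarith, ?_⟩
        apply hball
        simp [Real.dist_eq]
        rw [abs_of_pos] <;> linarith
      have := le_csSup hTbdd this
      linarith
    -- a + s • k₀ ∈ closure A
    have hscl : a + s • k₀ ∈ closure A := by
      have htend : Filter.Tendsto (fun t : ℝ => a + t • k₀) (nhdsWithin s (Set.Iio s)) (nhds (a + s • k₀)) :=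
        (hraycont.tendsto s).mono_left nhdsWithin_le_nhds
      refine mem_closure_of_tendsto htend ?_
      have hIoo : Set.Ioo 0 s ∈ nhdsWithin s (Set.Iio s) := by
        refine mem_nhdsWithin.2 ⟨Set.Ioi 0, isOpen_Ioi, hspos, ?_⟩
        rintro t ⟨ht0, hts⟩
        exact ⟨ht0, hts⟩
      filter_upwards [hIoo] with t ht
      obtain ⟨t', ht'T, htt'⟩ := exists_lt_of_lt_csSup hTne ht.2
      exact (hTdown ht.1.le htt'.le ht'T).2
    -- conclude
    refine ⟨a + s • k₀, ?_, s • k₀, hsmul hspos hk₀U, by module⟩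
    rw [hvi]
    exact ⟨hscl, hsA⟩
end

section
/- (Proposition 3.1(iv).) Let M, N ⊆ Y be nonempty with M ≼_K N, i.e. v - u ∉ -int K for all u ∈ M and v ∈ N. Then WSup M ≼_K WInf N; that is, v - u ∉ -int K for every weakly supremal element u of M and every weakly infimal element v of N. -/
open Pointwise

/-- The set of weakly infimal elements of `M ⊆ Y` w.r.t. the cone `K`. -/
def WInf {Y : Type*} [AddCommGroup Y] [TopologicalSpace Y] (K M : Set Y) : Set Y :=
  {v : Y | (∀ m ∈ M, m - v ∉ -interior K) ∧
    ∀ w : Y, v - w ∈ -interior K → ∃ m ∈ M, m - w ∈ -interior K}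

/-- Proposition 3.1(iv): if `M ≼_K N` then `WSup M ≼_K WInf N`. -/
theorem stmt_19
    {Y : Type*} [AddCommGroup Y] [Module ℝ Y] [TopologicalSpace Y]
    [IsTopologicalAddGroup Y] [ContinuousSMul ℝ Y] [LocallyConvexSpace ℝ Y] [T2Space Y]
    (K : Set Y) (hKcl : IsClosed K) (hKcx : Convex ℝ K)
    (hKcone : ∀ ⦃c : ℝ⦄, 0 ≤ c → ∀ ⦃y : Y⦄, y ∈ K → c • y ∈ K)
    (hKne : K ≠ Set.univ) (hKint : (interior K).Nonempty)
    (M N : Set Y) (hM : M.Nonempty) (hN : N.Nonempty)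
    (hMN : ∀ u ∈ M, ∀ v ∈ N, v - u ∉ -interior K) :
    ∀ u ∈ WSup K M, ∀ v ∈ WInf K N, v - u ∉ -interior K := by
  have hadd : ∀ x ∈ K, ∀ y ∈ K, x + y ∈ K := by
    intro x hx y hy
    have hmid : (2⁻¹ : ℝ) • x + (2⁻¹ : ℝ) • y ∈ K := by
      have := hKcx hx hy (by norm_num : (0:ℝ) ≤ 2⁻¹) (by norm_num : (0:ℝ) ≤ 2⁻¹) (by norm_num)
      simpa using this
    have h2 := hKcone (by norm_num : (0:ℝ) ≤ 2) hmid
    have hxy : (2:ℝ) • ((2⁻¹ : ℝ) • x + (2⁻¹ : ℝ) • y) = x + y := by module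
    rwa [hxy] at h2
  have hintadd : ∀ x ∈ interior K, ∀ y ∈ K, x + y ∈ interior K := by
    intro x hx y hy
    have hopen : IsOpen (interior K + ({y} : Set Y)) := (isOpen_interior).add_right
    have hsub : interior K + ({y} : Set Y) ⊆ K := by
      rintro z ⟨a, ha, b, hb, rfl⟩
      simp only [Set.mem_singleton_iff] at hb
      subst hb
      exact hadd a (interior_subset ha) b hy
    exact interior_maximal hsub hopen (Set.add_mem_add hx rfl)
  have hhalf : ∀ x ∈ interior K, (2⁻¹ : ℝ) • x ∈ interior K := by
    intro x hx
    have h1 : (2⁻¹ : ℝ) • x ∈ (2⁻¹ : ℝ) • interior K := Set.smul_mem_smul_set hx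
    rw [← interior_smul₀ (by norm_num : (2⁻¹:ℝ) ≠ 0)] at h1
    refine interior_mono ?_ h1
    rintro z ⟨a, ha, rfl⟩
    exact hKcone (by norm_num) ha
  intro u hu v hv h
  have huv : u - v ∈ interior K := by
    have := Set.mem_neg.mp h
    simpa [neg_sub] using this
  set w : Y := (2⁻¹ : ℝ) • (u + v) with hw
  have hwu : w - u ∈ -interior K := by
    rw [Set.mem_neg]
    have e : -(w - u) = (2⁻¹ : ℝ) • (u - v) := by rw [hw]; module
    rw [e]; exact hhalf _ huv
  have hvw : v - w ∈ -interior K := by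
    rw [Set.mem_neg]
    have e : -(v - w) = (2⁻¹ : ℝ) • (u - v) := by rw [hw]; module
    rw [e]; exact hhalf _ huv
  obtain ⟨m, hm, hmw⟩ := hu.2 w hwu
  obtain ⟨n, hn, hnw⟩ := hv.2 w hvw
  -- hmw : w - m ∈ -interior K, hnw : n - w ∈ -interior K
  have h1 : m - w ∈ interior K := by
    have := Set.mem_neg.mp hmw; simpa [neg_sub] using this
  have h2 : w - n ∈ interior K := by
    have := Set.mem_neg.mp hnw; simpa [neg_sub] using this
  have h3 : (m - w) + (w - n) ∈ interior K := hintadd _ h1 _ (interior_subset h2)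
  have h4 : m - n ∈ interior K := by simpa using h3
  have h5 : n - m ∈ -interior K := by
    rw [Set.mem_neg]; simpa [neg_sub] using h4
  exact hMN m hm n hn h5
end
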